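/- In a medium, if m is a concise message for a state P producing Q (so P ≠ Q), then the set difference of the token content of Q minus the token content of P equals the content of m, and the symmetric difference of the contents of Q and P equals the disjoint union of C(m) and C(m̃), where m̃ is the reverse message of m. -/

import Mathlib

variable {S : Type*}

/-- Result of applying message `m` (a list of tokens) to state `P`. -/
def mApply (m : List (S → S)) (P : S) : S := m.foldl (fun s τ => τ s) P

/-- `τ'` is a reverse of `τ`. -/
def IsReverse (τ τ' : S → S) : Prop := ∀ P Q : S, P ≠ Q → (τ P = Q ↔ τ' Q = P)

/-- `(S, T)` is a token system. -/
def IsTokenSystem (T : Set (S → S)) : Prop :=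
  Nontrivial S ∧ T.Nonempty ∧ ∀ τ ∈ T, τ ≠ id

/-- `m` is a message of the token system with token set `T`. -/
def IsMsg (T : Set (S → S)) (m : List (S → S)) : Prop := ∀ τ ∈ m, τ ∈ T

/-- `m` is stepwise effective for `P`. -/
def StepwiseEff : List (S → S) → S → Prop
  | [], _ => True
  | τ :: rest, P => τ P ≠ P ∧ StepwiseEff rest (τ P)

/-- `m` is consistent: it contains no token together with a reverse of it. -/
def Consistent (m : List (S → S)) : Prop :=
  ∀ τ ∈ m, ∀ τ' ∈ m, ¬ IsReverse τ τ'

/-- `m` is concise for `P`. -/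
def Concise (T : Set (S → S)) (m : List (S → S)) (P : S) : Prop :=
  IsMsg T m ∧ Consistent m ∧ StepwiseEff m P ∧ m.Nodup

/-- `m` is a return message for `P`. -/
def IsReturn (m : List (S → S)) (P : S) : Prop :=
  StepwiseEff m P ∧ mApply m P = P

/-- `m` is vacuous: its indices partition into pairs of mutually reverse tokens. -/
def Vacuous (m : List (S → S)) : Prop :=
  ∃ σ : Equiv.Perm (Fin m.length),
    (∀ i, σ i ≠ i) ∧ (∀ i, σ (σ i) = i) ∧
    ∀ i, IsReverse (m.get i) (m.get (σ i))

/-- `(S, T)` is a medium: token system satisfying [Ma] and [Mb]. -/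
def IsMedium (T : Set (S → S)) : Prop :=
  IsTokenSystem T ∧
  (∀ P Q : S, P ≠ Q → ∃ m, Concise T m P ∧ mApply m P = Q) ∧
  (∀ (m : List (S → S)) (P : S), IsMsg T m → IsReturn m P → Vacuous m)

/-- Content of a message: its set of tokens. -/
def msgContent (m : List (S → S)) : Set (S → S) := {τ | τ ∈ m}

/-- Token content of a state `P`. -/
def SContent (T : Set (S → S)) (P : S) : Set (S → S) :=
  {τ | ∃ (V : S) (m : List (S → S)), Concise T m V ∧ mApply m V = P ∧ τ ∈ m}

/-- `mr` is the reverse message `τ̃ₙ…τ̃₁` of `m = τ₁…τₙ`. -/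
def IsReverseOfMsg (m mr : List (S → S)) : Prop :=
  List.Forall₂ (fun τ τ' => IsReverse τ τ' ∧ IsReverse τ' τ) m mr.reverse


/-!
Concatenating concise messages around a closed walk of states gives a return message, which
by [Mb] is vacuous: each of its tokens is paired with a reverse of it elsewhere in the walk.
If a token `τ` of `m : P → Q` also occurred in a concise message `n : V → P`, the return
message `n m w` (with `w` concise from `Q` back to `V`) would contain `τ` twice but its
reverse at most once, since `n` and `m` are consistent and `w` is repetition-free. Conversely,
a token `τ` of a concise message `n : V → Q` is paired in `n m̃ z` (with `z` concise from
`P` to `V`) with a reverse outside `n`. That reverse cannot lie in `z`: then `τ` would lie in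
`z̃`, which is concise from `V` to `P`, so `τ` would be in the content of `P`. Hence it lies
in `m̃`, and `τ ∈ m`. Since `m̃` is concise from `Q` to `P`, the same applies with `P` and `Q`
exchanged, which gives the symmetric difference.
-/

open Finset

theorem List.exists_forall₂_of_forall_exists {α β : Type*} {R : α → β → Prop} {l : List α}
    (h : ∀ a ∈ l, ∃ b, R a b) : ∃ l', Forall₂ R l l' := by
  induction l with
  | nil => exact ⟨[], .nil⟩
  | cons a l ih =>
    obtain ⟨b, hab⟩ := h a mem_cons_self
    obtain ⟨l', hl'⟩ := ih fun a' ha' => h a' (mem_cons_of_mem _ ha')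
    exact ⟨b :: l', .cons hab hl'⟩

namespace List.Forall₂

variable {α β : Type*} {R : α → β → Prop} {l₁ : List α} {l₂ : List β}

theorem exists_of_mem_left (h : Forall₂ R l₁ l₂) {a : α} (ha : a ∈ l₁) : ∃ b ∈ l₂, R a b := by
  induction h with
  | nil => simp at ha
  | cons hR _ ih =>
    rcases mem_cons.1 ha with rfl | ha
    · exact ⟨_, mem_cons_self, hR⟩
    · obtain ⟨b, hb, hab⟩ := ih ha
      exact ⟨b, mem_cons_of_mem _ hb, hab⟩

theorem exists_of_mem_right (h : Forall₂ R l₁ l₂) {b : β} (hb : b ∈ l₂) : ∃ a ∈ l₁, R a b := by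
  induction h with
  | nil => simp at hb
  | cons hR _ ih =>
    rcases mem_cons.1 hb with rfl | hb
    · exact ⟨_, mem_cons_self, hR⟩
    · obtain ⟨a, ha, hab⟩ := ih hb
      exact ⟨a, mem_cons_of_mem _ ha, hab⟩

end List.Forall₂

theorem List.count_eq_card_filter_get {α : Type*} [DecidableEq α] (l : List α) (a : α) :
    l.count a = #{i : Fin l.length | l.get i = a} :=
  (Fin.card_filter_univ_eq_vector_get_eq_count a ⟨l, rfl⟩).symm

namespace IsReverse

variable {τ τ' a b : S → S}

theorem symm (h : IsReverse τ τ') : IsReverse τ' τ := fun P Q hPQ =>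
  (h Q P hPQ.symm).symm

theorem unique (ha : IsReverse τ a) (hb : IsReverse τ b) : a = b := by
  funext Q
  by_cases hhit : ∃ P, P ≠ Q ∧ τ P = Q
  · obtain ⟨P, hPQ, hτ⟩ := hhit
    rw [(ha P Q hPQ).1 hτ, (hb P Q hPQ).1 hτ]
  · push Not at hhit
    have fixes : ∀ ρ, IsReverse τ ρ → ρ Q = Q := fun ρ hρ => by
      by_contra hne
      exact hhit (ρ Q) hne ((hρ (ρ Q) Q hne).2 rfl)
    rw [fixes a ha, fixes b hb]

theorem unique_left (ha : IsReverse a τ) (hb : IsReverse b τ) : a = b :=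
  ha.symm.unique hb.symm

end IsReverse

theorem biUnique_isReverse_and_isReverse :
    Relator.BiUnique fun τ τ' : S → S => IsReverse τ τ' ∧ IsReverse τ' τ :=
  ⟨fun _ _ _ ha hb => ha.1.unique_left hb.1, fun _ _ _ ha hb => ha.1.unique hb.1⟩

theorem mApply_append (a b : List (S → S)) (P : S) :
    mApply (a ++ b) P = mApply b (mApply a P) :=
  List.foldl_append

theorem stepwiseEff_append {a b : List (S → S)} {P : S} :
    StepwiseEff (a ++ b) P ↔ StepwiseEff a P ∧ StepwiseEff b (mApply a P) := by
  induction a generalizing P with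
  | nil => simp [StepwiseEff, mApply]
  | cons τ rest ih =>
    simp only [List.cons_append, StepwiseEff, ih, mApply, List.foldl_cons]
    tauto

theorem StepwiseEff.exists_ne_of_mem {m : List (S → S)} {P : S} (h : StepwiseEff m P)
    {τ : S → S} (hτ : τ ∈ m) : ∃ X, τ X ≠ X := by
  induction m generalizing P with
  | nil => simp at hτ
  | cons a rest ih =>
    rcases List.mem_cons.1 hτ with rfl | hτ
    · exact ⟨P, h.1⟩
    · exact ih h.2 hτ

theorem concise_nil (T : Set (S → S)) (P : S) : Concise T [] P :=
  ⟨by simp [IsMsg], by simp [Consistent], trivial, List.nodup_nil⟩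

theorem Vacuous.exists_isReverse_mem {u : List (S → S)} (hu : Vacuous u) {τ : S → S}
    (hτ : τ ∈ u) : ∃ ρ ∈ u, IsReverse τ ρ := by
  obtain ⟨σ, -, -, hσ⟩ := hu
  obtain ⟨i, rfl⟩ := List.mem_iff_get.1 hτ
  exact ⟨u.get (σ i), u.get_mem _, hσ i⟩

theorem Vacuous.count_le_count [DecidableEq (S → S)] {u : List (S → S)} (hu : Vacuous u)
    {τ τ' : S → S} (hR : IsReverse τ τ') : u.count τ ≤ u.count τ' := by
  obtain ⟨σ, -, -, hσ⟩ := hu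
  rw [List.count_eq_card_filter_get, List.count_eq_card_filter_get]
  refine card_le_card_of_injOn σ (fun i hi => ?_) σ.injective.injOn
  simp only [coe_filter, Set.mem_ofPred_eq, mem_univ, true_and] at hi ⊢
  exact (hi ▸ hσ i).unique hR

namespace IsReverseOfMsg

variable {m mr : List (S → S)}

theorem exists_mem_left (h : IsReverseOfMsg m mr) {τ : S → S} (hτ : τ ∈ m) :
    ∃ ρ ∈ mr, IsReverse τ ρ ∧ IsReverse ρ τ := by
  obtain ⟨ρ, hρ, hR⟩ := List.Forall₂.exists_of_mem_left h hτ
  exact ⟨ρ, List.mem_reverse.1 hρ, hR⟩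

theorem exists_mem_right (h : IsReverseOfMsg m mr) {ρ : S → S} (hρ : ρ ∈ mr) :
    ∃ τ ∈ m, IsReverse τ ρ ∧ IsReverse ρ τ :=
  List.Forall₂.exists_of_mem_right h (List.mem_reverse.2 hρ)

theorem stepwiseEff_and_mApply_eq {P : S} (h : IsReverseOfMsg m mr) (hse : StepwiseEff m P) :
    StepwiseEff mr (mApply m P) ∧ mApply mr (mApply m P) = P := by
  suffices ∀ r, List.Forall₂ (fun τ τ' => IsReverse τ τ' ∧ IsReverse τ' τ) m r →
      StepwiseEff r.reverse (mApply m P) ∧ mApply r.reverse (mApply m P) = P by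
    simpa using this _ h
  intro r hr
  clear h
  induction hr generalizing P with
  | nil => exact ⟨trivial, rfl⟩
  | @cons τ τ' rest r hτ' _ ih =>
    obtain ⟨ih_eff, ih_apply⟩ := ih hse.2
    have hback : τ' (τ P) = P := (hτ'.1 P (τ P) (Ne.symm hse.1)).1 rfl
    rw [List.reverse_cons, show mApply (τ :: rest) P = mApply rest (τ P) from rfl,
      stepwiseEff_append, mApply_append, ih_apply]
    exact ⟨⟨ih_eff, by simpa [hback] using hse.1.symm, trivial⟩, hback⟩

end IsReverseOfMsg

namespace IsMedium

variable {T : Set (S → S)}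

theorem exists_concise (hM : IsMedium T) (P V : S) : ∃ w, Concise T w P ∧ mApply w P = V := by
  by_cases hPV : P = V
  · exact ⟨[], concise_nil T P, hPV⟩
  · exact hM.2.1 P V hPV

theorem vacuous_append_append (hM : IsMedium T) {a b c : List (S → S)} {X Y Z : S}
    (ha : Concise T a X) (hXY : mApply a X = Y) (hb : Concise T b Y) (hYZ : mApply b Y = Z)
    (hc : Concise T c Z) (hZX : mApply c Z = X) : Vacuous (a ++ b ++ c) := by
  refine hM.2.2 _ X ?_ ⟨?_, ?_⟩
  · simp only [IsMsg, List.mem_append]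
    rintro τ ((hτ | hτ) | hτ)
    exacts [ha.1 τ hτ, hb.1 τ hτ, hc.1 τ hτ]
  · rw [stepwiseEff_append, stepwiseEff_append, mApply_append, hXY, hYZ]
    exact ⟨⟨ha.2.2.1, hb.2.2.1⟩, hc.2.2.1⟩
  · rw [mApply_append, mApply_append, hXY, hYZ, hZX]

theorem exists_isReverse_mem (hM : IsMedium T) {τ : S → S} (hT : τ ∈ T) {X : S}
    (hX : τ X ≠ X) : ∃ τ' ∈ T, IsReverse τ τ' := by
  obtain ⟨w, hw, hwX⟩ := hM.2.1 (τ X) X hX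
  have hmsg : IsMsg T (τ :: w) := by simpa [IsMsg, hT] using hw.1
  have hvac : Vacuous (τ :: w) := hM.2.2 _ X hmsg ⟨⟨hX, hw.2.2.1⟩, hwX⟩
  obtain ⟨ρ, hρ, hτρ⟩ := hvac.exists_isReverse_mem List.mem_cons_self
  exact ⟨ρ, hmsg ρ hρ, hτρ⟩

theorem exists_isReverseOfMsg (hM : IsMedium T) {m : List (S → S)} {P : S}
    (hmsg : IsMsg T m) (hse : StepwiseEff m P) : ∃ mr, IsReverseOfMsg m mr := by
  obtain ⟨r, hr⟩ : ∃ r, List.Forall₂ (fun τ τ' => IsReverse τ τ' ∧ IsReverse τ' τ) m r :=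
    List.exists_forall₂_of_forall_exists fun τ hτ => by
      obtain ⟨X, hX⟩ := hse.exists_ne_of_mem hτ
      obtain ⟨τ', -, hτ'⟩ := hM.exists_isReverse_mem (hmsg τ hτ) hX
      exact ⟨τ', hτ', hτ'.symm⟩
  exact ⟨r.reverse, by rwa [IsReverseOfMsg, List.reverse_reverse]⟩

theorem concise_of_isReverseOfMsg (hM : IsMedium T) {m mr : List (S → S)} {P Q : S}
    (hm : Concise T m P) (hPQ : mApply m P = Q) (h : IsReverseOfMsg m mr) :
    Concise T mr Q ∧ mApply mr Q = P := by
  obtain ⟨hmsg, hcons, hse, hnd⟩ := hm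
  obtain ⟨hse', happ⟩ := h.stepwiseEff_and_mApply_eq hse
  subst hPQ
  refine ⟨⟨fun ρ hρ => ?_, fun ρ₁ h₁ ρ₂ h₂ hρ => ?_, hse', ?_⟩, happ⟩
  · obtain ⟨τ, hτ, hτρ, -⟩ := h.exists_mem_right hρ
    obtain ⟨X, hX⟩ := hse.exists_ne_of_mem hτ
    obtain ⟨τ', hτ'T, hτ'⟩ := hM.exists_isReverse_mem (hmsg τ hτ) hX
    rwa [hτρ.unique hτ']
  · obtain ⟨τ₁, hτ₁, -, hρτ₁⟩ := h.exists_mem_right h₁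
    obtain ⟨τ₂, hτ₂, hτρ₂, -⟩ := h.exists_mem_right h₂
    obtain rfl : τ₁ = ρ₂ := hρτ₁.unique hρ
    exact hcons τ₂ hτ₂ τ₁ hτ₁ hτρ₂
  · exact List.nodup_reverse.1 ((List.rel_nodup biUnique_isReverse_and_isReverse h).1 hnd)

theorem notMem_sContent_of_mem (hM : IsMedium T) {m : List (S → S)} {P Q : S}
    (hm : Concise T m P) (hPQ : mApply m P = Q) {τ : S → S} (hτ : τ ∈ m) :
    τ ∉ SContent T P := by
  classical
  rintro ⟨V, n, hn, hnP, hτn⟩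
  obtain ⟨w, hw, hwV⟩ := hM.exists_concise Q V
  have hvac := hM.vacuous_append_append hn hnP hm hPQ hw hwV
  obtain ⟨X, hX⟩ := hm.2.2.1.exists_ne_of_mem hτ
  obtain ⟨τ', -, hτ'⟩ := hM.exists_isReverse_mem (hm.1 τ hτ) hX
  have hτ'n : τ' ∉ n := fun h => hn.2.1 τ hτn τ' h hτ'
  have hτ'm : τ' ∉ m := fun h => hm.2.1 τ hτ τ' h hτ'
  have twice : 2 ≤ (n ++ m ++ w).count τ := by
    have := List.count_pos_iff.2 hτn
    have := List.count_pos_iff.2 hτ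
    simp only [List.count_append]
    omega
  have at_most_once : (n ++ m ++ w).count τ' ≤ 1 := by
    simp only [List.count_append, List.count_eq_zero_of_not_mem hτ'n,
      List.count_eq_zero_of_not_mem hτ'm, zero_add]
    exact List.nodup_iff_count_le_one.1 hw.2.2.2 τ'
  have := hvac.count_le_count hτ'
  omega

theorem mem_of_mem_sContent_of_notMem (hM : IsMedium T) {m : List (S → S)} {P Q : S}
    (hm : Concise T m P) (hPQ : mApply m P = Q) {τ : S → S} (hτQ : τ ∈ SContent T Q)
    (hτP : τ ∉ SContent T P) : τ ∈ m := by
  obtain ⟨V, n, hn, hnQ, hτn⟩ := hτQ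
  obtain ⟨m', hm'⟩ := hM.exists_isReverseOfMsg hm.1 hm.2.2.1
  obtain ⟨hm'c, hm'P⟩ := hM.concise_of_isReverseOfMsg hm hPQ hm'
  obtain ⟨z, hz, hzV⟩ := hM.exists_concise P V
  obtain ⟨z', hz'⟩ := hM.exists_isReverseOfMsg hz.1 hz.2.2.1
  obtain ⟨hz'c, hz'P⟩ := hM.concise_of_isReverseOfMsg hz hzV hz'
  have hvac := hM.vacuous_append_append hn hnQ hm'c hm'P hz hzV
  obtain ⟨ρ, hρ, hτρ⟩ := hvac.exists_isReverse_mem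
    (List.mem_append_left _ (List.mem_append_left _ hτn))
  rcases List.mem_append.1 hρ with hρ | hρz
  · rcases List.mem_append.1 hρ with hρn | hρm'
    · exact absurd hτρ (hn.2.1 τ hτn ρ hρn)
    · obtain ⟨τ₀, hτ₀, hτ₀ρ, -⟩ := hm'.exists_mem_right hρm'
      rwa [hτρ.unique_left hτ₀ρ]
  · obtain ⟨ρ', hρ', -, hρ'ρ⟩ := hz'.exists_mem_left hρz
    rw [hτρ.unique_left hρ'ρ] at hτP
    exact absurd ⟨V, z', hz'c, hz'P, hρ'⟩ hτP

theorem sContent_diff_eq_msgContent (hM : IsMedium T) {m : List (S → S)} {P Q : S}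
    (hm : Concise T m P) (hPQ : mApply m P = Q) :
    SContent T Q \ SContent T P = msgContent m := by
  ext τ
  refine ⟨fun ⟨hτQ, hτP⟩ => hM.mem_of_mem_sContent_of_notMem hm hPQ hτQ hτP, fun hτ => ?_⟩
  exact ⟨⟨P, m, hm, hPQ, hτ⟩, hM.notMem_sContent_of_mem hm hPQ hτ⟩

end IsMedium

theorem stmt4_general {T : Set (S → S)} (hM : IsMedium T) (P Q : S)
    (m mr : List (S → S)) (hm : Concise T m P) (hPQ : mApply m P = Q)
    (hmr : IsReverseOfMsg m mr) :
    SContent T Q \ SContent T P = msgContent m ∧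
    symmDiff (SContent T Q) (SContent T P) = msgContent m ∪ msgContent mr ∧
    Disjoint (msgContent m) (msgContent mr) := by
  obtain ⟨hmrc, hmrP⟩ := hM.concise_of_isReverseOfMsg hm hPQ hmr
  refine ⟨hM.sContent_diff_eq_msgContent hm hPQ, ?_, ?_⟩
  · rw [Set.symmDiff_def, hM.sContent_diff_eq_msgContent hm hPQ,
      hM.sContent_diff_eq_msgContent hmrc hmrP]
  · refine Set.disjoint_left.2 fun τ hτm hτmr => ?_
    obtain ⟨τ₀, hτ₀, hτ₀τ, -⟩ := hmr.exists_mem_right hτmr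
    exact hm.2.1 τ₀ hτ₀ τ hτm hτ₀τ

/-- If a concise message `m` produces `Q` from `P`, then
`SContent Q \\ SContent P = C(m)` and the symmetric difference of the contents of
`Q` and `P` is the disjoint union of `C(m)` and `C(m̃)`. -/
theorem stmt4 {T : Set (S → S)} (hM : IsMedium T) (P Q : S)
    (m mr : List (S → S)) (hm : Concise T m P) (hPQ : mApply m P = Q) (hne : P ≠ Q)
    (hmr : IsReverseOfMsg m mr) :
    SContent T Q \ SContent T P = msgContent m ∧
    symmDiff (SContent T Q) (SContent T P) = msgContent m ∪ msgContent mr ∧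
    Disjoint (msgContent m) (msgContent mr) :=
  stmt4_general hM P Q m mr hm hPQ hmr
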